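/- Let H, K be complex inner product spaces with dim H ≥ 2, and let A : H → K be a nonzero additive mapping with dense image that preserves orthogonality. Then A is real-linear. -/

import Mathlib

/-!
If `f` is additive and preserves orthogonality, then `f (u + v)` and `f (u - v)` are orthogonal
whenever `‖u‖ = ‖v‖` and `⟪u, v⟫` is real, so `‖f (2u)‖ = ‖f (2v)‖` by Pythagoras. Rotating by a
phase and passing through a vector orthogonal to `v` (this is where `dim ≥ 2` enters) shows that
`‖f u‖` depends only on `‖u‖`, and Pythagoras again makes it monotone in `‖u‖`. Together with
`‖f (n • u)‖ = n ‖f u‖` this gives continuity at `0`, and a continuous additive map is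
`ℝ`-linear.
-/

section

open RCLike ComplexConjugate
open scoped InnerProductSpace

variable {𝕜 E F : Type*} [RCLike 𝕜] [NormedAddCommGroup E] [InnerProductSpace 𝕜 E]
  [NormedAddCommGroup F] [InnerProductSpace 𝕜 F]

theorem exists_inner_eq_zero_and_norm_eq (hE : 2 ≤ Module.rank 𝕜 E) (v : E) {r : ℝ}
    (hr : 0 ≤ r) : ∃ w : E, ⟪v, w⟫_𝕜 = 0 ∧ ‖w‖ = r := by
  have hne : (𝕜 ∙ v)ᗮ ≠ ⊥ := by
    rw [Ne, Submodule.orthogonal_eq_bot_iff]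
    intro htop
    have hrank : Module.rank 𝕜 E ≤ 1 := rank_le_one_iff.mpr
      ⟨v, fun w => Submodule.mem_span_singleton.mp (htop ▸ Submodule.mem_top)⟩
    exact absurd (hE.trans hrank) (by norm_num)
  obtain ⟨w, hw, hw0⟩ := Submodule.exists_mem_ne_zero_of_ne_bot hne
  refine ⟨((r / ‖w‖ : ℝ) : 𝕜) • w, ?_, ?_⟩
  · rw [inner_smul_right, Submodule.mem_orthogonal_singleton_iff_inner_right.mp hw, mul_zero]
  · rw [norm_smul, norm_ofReal, abs_of_nonneg (by positivity),
      div_mul_cancel₀ _ (norm_ne_zero_iff.mpr hw0)]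

variable (𝕜) in
def PreservesOrthogonality (f : E → F) : Prop :=
  ∀ x y, ⟪x, y⟫_𝕜 = 0 → ⟪f x, f y⟫_𝕜 = 0

namespace PreservesOrthogonality

variable {f : E →+ F}

theorem norm_map_add_sq (hf : PreservesOrthogonality 𝕜 f) {x y : E} (hxy : ⟪x, y⟫_𝕜 = 0) :
    ‖f (x + y)‖ ^ 2 = ‖f x‖ ^ 2 + ‖f y‖ ^ 2 := by
  rw [map_add, sq, sq, sq, norm_add_sq_eq_norm_sq_add_norm_sq_of_inner_eq_zero _ _ (hf x y hxy)]

theorem norm_map_eq_of_conj_inner_eq (hf : PreservesOrthogonality 𝕜 f)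
    {u v : E} (huv : ‖u‖ = ‖v‖) (hreal : conj ⟪u, v⟫_𝕜 = ⟪u, v⟫_𝕜) :
    ‖f u‖ = ‖f v‖ := by
  have hvu : ⟪v, u⟫_𝕜 = ⟪u, v⟫_𝕜 := (inner_conj_symm v u).symm.trans hreal
  have horth : ⟪u + v, u - v⟫_𝕜 = 0 := by
    rw [inner_sub_right, inner_add_left, inner_add_left, hvu, inner_self_eq_norm_sq_to_K,
      inner_self_eq_norm_sq_to_K, huv]
    ring
  have horth' : ⟪u + v, -(u - v)⟫_𝕜 = 0 := by rw [inner_neg_right, horth, neg_zero]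
  have hdouble : ‖f (2 • u)‖ ^ 2 = ‖f (2 • v)‖ ^ 2 :=
    calc ‖f (2 • u)‖ ^ 2 = ‖f ((u + v) + (u - v))‖ ^ 2 := by congr 3; abel
      _ = ‖f ((u + v) + -(u - v))‖ ^ 2 := by
        rw [hf.norm_map_add_sq horth, hf.norm_map_add_sq horth', map_neg, norm_neg]
      _ = ‖f (2 • v)‖ ^ 2 := by congr 3; abel
  rw [map_nsmul, map_nsmul, norm_nsmul 𝕜, norm_nsmul 𝕜, nsmul_eq_mul, nsmul_eq_mul,
    pow_left_inj₀ (by positivity) (by positivity) two_ne_zero] at hdouble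
  exact mul_left_cancel₀ two_ne_zero hdouble

theorem norm_map_eq_of_norm_eq (hf : PreservesOrthogonality 𝕜 f) (hE : 2 ≤ Module.rank 𝕜 E)
    {u v : E} (huv : ‖u‖ = ‖v‖) : ‖f u‖ = ‖f v‖ := by
  obtain ⟨c, hc, hcuv⟩ := exists_norm_eq_mul_self ⟪u, v⟫_𝕜
  obtain ⟨w, hvw, hw⟩ := exists_inner_eq_zero_and_norm_eq hE v (norm_nonneg v)
  have hcv : ‖c • v‖ = ‖v‖ := by rw [norm_smul, hc, one_mul]
  calc ‖f u‖ = ‖f (c • v)‖ := hf.norm_map_eq_of_conj_inner_eq (huv.trans hcv.symm)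
        (by rw [inner_smul_right, ← hcuv, conj_ofReal])
    _ = ‖f w‖ := hf.norm_map_eq_of_conj_inner_eq (hcv.trans hw.symm)
        (by rw [inner_smul_left, hvw, mul_zero, map_zero])
    _ = ‖f v‖ := hf.norm_map_eq_of_conj_inner_eq hw
        (by rw [inner_eq_zero_symm.mp hvw, map_zero])

theorem norm_map_le_of_norm_le (hf : PreservesOrthogonality 𝕜 f) (hE : 2 ≤ Module.rank 𝕜 E)
    {u v : E} (huv : ‖u‖ ≤ ‖v‖) : ‖f u‖ ≤ ‖f v‖ := by
  have hgap : 0 ≤ ‖v‖ ^ 2 - ‖u‖ ^ 2 := sub_nonneg.mpr (by gcongr)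
  obtain ⟨w, huw, hw⟩ := exists_inner_eq_zero_and_norm_eq hE u (Real.sqrt_nonneg _)
  have hnorm : ‖u + w‖ = ‖v‖ := by
    rw [← sq_eq_sq₀ (norm_nonneg _) (norm_nonneg _), sq, sq,
      norm_add_sq_eq_norm_sq_add_norm_sq_of_inner_eq_zero _ _ huw, hw, Real.mul_self_sqrt hgap]
    ring
  have hpyth := hf.norm_map_add_sq huw
  rw [hf.norm_map_eq_of_norm_eq hE hnorm] at hpyth
  exact (pow_le_pow_iff_left₀ (norm_nonneg _) (norm_nonneg _) two_ne_zero).mp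
    (hpyth ▸ le_add_of_nonneg_right (sq_nonneg _))

theorem nsmul_norm_map_le (hf : PreservesOrthogonality 𝕜 f) (hE : 2 ≤ Module.rank 𝕜 E) (n : ℕ)
    {u v : E} (huv : n * ‖u‖ ≤ ‖v‖) : n * ‖f u‖ ≤ ‖f v‖ := by
  have h := hf.norm_map_le_of_norm_le hE (u := n • u) (v := v)
    (by rwa [norm_nsmul 𝕜, nsmul_eq_mul])
  rwa [map_nsmul, norm_nsmul 𝕜, nsmul_eq_mul] at h

theorem continuous (hf : PreservesOrthogonality 𝕜 f) (hE : 2 ≤ Module.rank 𝕜 E) :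
    Continuous f := by
  obtain ⟨x₀, -, hx₀⟩ := exists_inner_eq_zero_and_norm_eq hE (0 : E) zero_le_one
  refine continuous_of_continuousAt_zero f (Metric.continuousAt_iff.mpr fun ε hε => ?_)
  obtain ⟨n, hn⟩ := exists_nat_gt (‖f x₀‖ / ε)
  have hn0 : (0 : ℝ) < n := (div_nonneg (norm_nonneg _) hε.le).trans_lt hn
  refine ⟨1 / n, by positivity, fun u hu => ?_⟩
  rw [dist_zero_right, lt_div_iff₀ hn0, mul_comm] at hu
  rw [map_zero, dist_zero_right]
  have hfu := hf.nsmul_norm_map_le hE n (hu.le.trans_eq hx₀.symm)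
  rw [div_lt_iff₀ hε] at hn
  exact lt_of_mul_lt_mul_left (hfu.trans_lt hn) hn0.le

end PreservesOrthogonality

end

theorem stmt_2_general {H K : Type*} [NormedAddCommGroup H] [InnerProductSpace ℂ H]
    [NormedAddCommGroup K] [InnerProductSpace ℂ K]
    (hdim : 2 ≤ Module.rank ℂ H)
    (A : H → K)
    (hadd : ∀ x y, A (x + y) = A x + A y)
    (horth : ∀ x y : H, (inner ℂ x y : ℂ) = 0 → (inner ℂ (A x) (A y) : ℂ) = 0) :
    ∀ (t : ℝ) (x : H), A (t • x) = t • A x :=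
  let f : H →+ K := AddMonoidHom.mk' A hadd
  map_real_smul f (PreservesOrthogonality.continuous (f := f) horth hdim)

theorem stmt_2 {H K : Type*} [NormedAddCommGroup H] [InnerProductSpace ℂ H]
    [NormedAddCommGroup K] [InnerProductSpace ℂ K]
    (hdim : 2 ≤ Module.rank ℂ H)
    (A : H → K) (hA : A ≠ 0)
    (hadd : ∀ x y, A (x + y) = A x + A y)
    (hdense : DenseRange A)
    (horth : ∀ x y : H, (inner ℂ x y : ℂ) = 0 → (inner ℂ (A x) (A y) : ℂ) = 0) :
    ∀ (t : ℝ) (x : H), A (t • x) = t • A x :=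
  stmt_2_general hdim A hadd horth
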